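/- arXiv:1211.2713 — 2 statements merged into one kernel-verified Lean document; each statement's English description precedes it below -/
import Mathlib

section
/- Let C₁ and C₂ be real symmetric positive semidefinite d × d matrices with the same null space (i.e., C₁x = 0 if and only if C₂x = 0) such that C₁ ⪯ C₂ in the Loewner order, and let P₁ and P₂ be Moore–Penrose pseudoinverses of C₁ and C₂ respectively. Then P₂ ⪯ P₁. -/
open Matrix BigOperators

/-- `P` is a Moore–Penrose pseudoinverse of `M`. -/
def IsMoorePenrose {d : ℕ} (M P : Matrix (Fin d) (Fin d) ℝ) : Prop :=
  M * P * M = M ∧ P * M * P = P ∧ (M * P)ᵀ = M * P ∧ (P * M)ᵀ = P * M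

/-! For a positive semidefinite `C` with pseudoinverse `P`, the quadratic form `x ⬝ᵥ P x` is the
supremum of `2 (x ⬝ᵥ y) - y ⬝ᵥ C y` over the `y` orthogonal to the null space of `C`, attained at
`y = P x`. Equal null spaces make both suprema range over the same `y`, and `C₁ ⪯ C₂` makes every
term for `C₂` at most the corresponding term for `C₁`. -/

theorem Matrix.IsSymm.mulVec_dotProduct {n R : Type*} [Fintype n] [CommSemiring R]
    {A : Matrix n n R} (hA : A.IsSymm) (u v : n → R) : (A *ᵥ u) ⬝ᵥ v = u ⬝ᵥ (A *ᵥ v) := by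
  rw [dotProduct_comm, ← dotProduct_transpose_mulVec, hA.eq]

theorem Matrix.PosSemidef.two_mul_dotProduct_mulVec_sub_le {n : Type*} [Fintype n]
    {M : Matrix n n ℝ} (hM : M.PosSemidef) (u y : n → ℝ) :
    2 * (u ⬝ᵥ (M *ᵥ y)) - y ⬝ᵥ (M *ᵥ y) ≤ u ⬝ᵥ (M *ᵥ u) := by
  have hsymm : y ⬝ᵥ (M *ᵥ u) = u ⬝ᵥ (M *ᵥ y) := by
    rw [dotProduct_comm, (isHermitian_iff_isSymm.mp hM.1).mulVec_dotProduct]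
  have hnonneg := hM.dotProduct_mulVec_nonneg (u - y)
  simp only [star_trivial, mulVec_sub, dotProduct_sub, sub_dotProduct, hsymm] at hnonneg
  linarith

namespace IsMoorePenrose

variable {d : ℕ} {M P : Matrix (Fin d) (Fin d) ℝ}

theorem transpose (h : IsMoorePenrose M P) : IsMoorePenrose Mᵀ Pᵀ := by
  obtain ⟨hMPM, hPMP, hMP, hPM⟩ := h
  refine ⟨?_, ?_, ?_, ?_⟩
  · rw [← transpose_mul, ← transpose_mul, ← mul_assoc, hMPM]
  · rw [← transpose_mul, ← transpose_mul, ← mul_assoc, hPMP]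
  · rw [← transpose_mul, hPM, hPM]
  · rw [← transpose_mul, hMP, hMP]

theorem unique {Q : Matrix (Fin d) (Fin d) ℝ} (hP : IsMoorePenrose M P)
    (hQ : IsMoorePenrose M Q) : P = Q := by
  obtain ⟨hP1, hP2, hP3, hP4⟩ := hP
  obtain ⟨hQ1, hQ2, hQ3, hQ4⟩ := hQ
  have hMP : M * P = M * Q := by
    calc M * P = (M * Q * M * P)ᵀ := by rw [hQ1, hP3]
      _ = (M * P)ᵀ * (M * Q)ᵀ := by rw [← transpose_mul, ← mul_assoc, mul_assoc _ M]
      _ = M * Q := by rw [hP3, hQ3, ← mul_assoc, hP1]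
  have hPM : P * M = Q * M := by
    calc
      P * M = (P * M * Q * M)ᵀ := by
        rw [mul_assoc (P * M), mul_assoc P, ← mul_assoc M, hQ1, hP4]
      _ = (Q * M)ᵀ * (P * M)ᵀ := by rw [← transpose_mul, mul_assoc]
      _ = Q * M := by rw [hP4, hQ4, mul_assoc Q, ← mul_assoc M, hP1]
  calc P = P * M * P := hP2.symm
    _ = Q * M * Q := by rw [hPM, mul_assoc, hMP, ← mul_assoc]
    _ = Q := hQ2

theorem isSymm (hM : M.IsSymm) (h : IsMoorePenrose M P) : P.IsSymm :=
  (hM.eq ▸ h.transpose).unique h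

theorem dotProduct_mulVec_eq_zero (h : IsMoorePenrose M P) {z : Fin d → ℝ}
    (hz : M *ᵥ z = 0) (x : Fin d → ℝ) : z ⬝ᵥ (P *ᵥ x) = 0 := by
  have hP : P = Mᵀ * (Pᵀ * P) := by
    rw [← mul_assoc, ← transpose_mul, h.2.2.2, h.2.1]
  rw [hP, ← mulVec_mulVec, dotProduct_transpose_mulVec, hz, dotProduct_zero]

theorem mulVec_dotProduct_mulVec_mulVec (h : IsMoorePenrose M P) (hP : P.IsSymm)
    (x : Fin d → ℝ) : (P *ᵥ x) ⬝ᵥ (M *ᵥ (P *ᵥ x)) = x ⬝ᵥ (P *ᵥ x) := by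
  rw [hP.mulVec_dotProduct, mulVec_mulVec, mulVec_mulVec, h.2.1]

theorem two_mul_dotProduct_sub_le (hM : M.PosSemidef) (h : IsMoorePenrose M P)
    {y : Fin d → ℝ} (hy : ∀ z, M *ᵥ z = 0 → z ⬝ᵥ y = 0) (x : Fin d → ℝ) :
    2 * (x ⬝ᵥ y) - y ⬝ᵥ (M *ᵥ y) ≤ x ⬝ᵥ (P *ᵥ x) := by
  have hMs : M.IsSymm := isHermitian_iff_isSymm.mp hM.1
  have hPs : P.IsSymm := h.isSymm hMs
  have hxy : x ⬝ᵥ y = (P *ᵥ x) ⬝ᵥ (M *ᵥ y) := by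
    have hcomm : M * P = P * M := by rw [← h.2.2.1, transpose_mul, hPs.eq, hMs.eq]
    have hker : M *ᵥ (x - P *ᵥ (M *ᵥ x)) = 0 := by
      rw [mulVec_sub, mulVec_mulVec, mulVec_mulVec, h.1, sub_self]
    calc x ⬝ᵥ y = (P *ᵥ (M *ᵥ x)) ⬝ᵥ y := by
          rw [← sub_eq_zero, ← sub_dotProduct, hy _ hker]
      _ = (M *ᵥ x) ⬝ᵥ (P *ᵥ y) := hPs.mulVec_dotProduct _ _
      _ = x ⬝ᵥ (M *ᵥ (P *ᵥ y)) := hMs.mulVec_dotProduct _ _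
      _ = x ⬝ᵥ (P *ᵥ (M *ᵥ y)) := by rw [mulVec_mulVec, mulVec_mulVec, hcomm]
      _ = (P *ᵥ x) ⬝ᵥ (M *ᵥ y) := (hPs.mulVec_dotProduct _ _).symm
  rw [hxy, ← h.mulVec_dotProduct_mulVec_mulVec hPs]
  exact hM.two_mul_dotProduct_mulVec_sub_le _ y

end IsMoorePenrose

/-- If `C₁ ⪯ C₂` are PSD matrices with the same null space, then their Moore–Penrose
pseudoinverses satisfy `P₂ ⪯ P₁`. -/
theorem pseudoinverse_antitone (d : ℕ) (C₁ C₂ : Matrix (Fin d) (Fin d) ℝ)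
    (hC₁ : C₁.PosSemidef) (hC₂ : C₂.PosSemidef)
    (hker : ∀ x : Fin d → ℝ, C₁.mulVec x = 0 ↔ C₂.mulVec x = 0)
    (hle : (C₂ - C₁).PosSemidef)
    (P₁ P₂ : Matrix (Fin d) (Fin d) ℝ)
    (hP₁ : IsMoorePenrose C₁ P₁) (hP₂ : IsMoorePenrose C₂ P₂) :
    (P₁ - P₂).PosSemidef := by
  have hP₂s : P₂.IsSymm := hP₂.isSymm (isHermitian_iff_isSymm.mp hC₂.1)
  refine .of_dotProduct_mulVec_nonneg ?_ fun x => ?_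
  · exact isHermitian_iff_isSymm.mpr
      ((hP₁.isSymm (isHermitian_iff_isSymm.mp hC₁.1)).sub hP₂s)
  set y := P₂ *ᵥ x
  have hy : ∀ z, C₁ *ᵥ z = 0 → z ⬝ᵥ y = 0 := fun z hz =>
    hP₂.dotProduct_mulVec_eq_zero ((hker z).mp hz) x
  have hC : y ⬝ᵥ (C₁ *ᵥ y) ≤ y ⬝ᵥ (C₂ *ᵥ y) := by
    simpa [sub_mulVec] using hle.dotProduct_mulVec_nonneg y
  simp only [star_trivial, sub_mulVec, dotProduct_sub, sub_nonneg]
  calc x ⬝ᵥ y = 2 * (x ⬝ᵥ y) - y ⬝ᵥ (C₂ *ᵥ y) := by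
        rw [hP₂.mulVec_dotProduct_mulVec_mulVec hP₂s]; ring
    _ ≤ 2 * (x ⬝ᵥ y) - y ⬝ᵥ (C₁ *ᵥ y) := by linarith
    _ ≤ x ⬝ᵥ (P₁ *ᵥ x) := hP₁.two_mul_dotProduct_sub_le hC₁ hy x
end

section
/- Let p ∈ [1, ∞) with dual exponent q (1/p + 1/q = 1, with q = ∞ and ‖z‖_∞ = maxᵢ |zᵢ| when p = 1). Let A be a real n × d matrix and Ã a real ñ × d matrix such that (1/2)·‖A x‖_p ≤ ‖Ã x‖_p ≤ (3/2)·‖A x‖_p for all x ∈ ℝᵈ. Let C be a real d × r matrix, and suppose Ũ = Ã C satisfies |||Ũ|||_p ≤ α and ‖z‖_q ≤ β · ‖Ũ z‖_p for all z ∈ ℝʳ. Then U = A C satisfies |||U|||_p ≤ 2α and ‖z‖_q ≤ 2β · ‖U z‖_p for all z ∈ ℝʳ. -/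
open Matrix BigOperators

/-- The ℓ_p norm of a vector. -/
noncomputable def lpNorm {n : ℕ} (p : ℝ) (v : Fin n → ℝ) : ℝ := (∑ i, |v i| ^ p) ^ (1 / p)

/-- The dual-norm `‖·‖_q` where `1/p + 1/q = 1`; when `p = 1` this is the max-norm. -/
noncomputable def dualNorm {n : ℕ} (p : ℝ) (v : Fin n → ℝ) : ℝ :=
  if p = 1 then ⨆ i, |v i| else lpNorm (p / (p - 1)) v

/-- The entrywise p-norm of a matrix: `(∑ i j, |M i j|^p)^(1/p)`. -/
noncomputable def entryNorm {n m : ℕ} (p : ℝ) (M : Matrix (Fin n) (Fin m) ℝ) : ℝ :=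
  (∑ i, ∑ j, |M i j| ^ p) ^ (1 / p)

/-! The columns of `A * C` are the images under `A` of the columns of `C`, and the entrywise
norm is the ℓ_p norm of the column norms. Hence the lower bound `‖A x‖_p ≤ 2 ‖Ã x‖_p`, applied
column by column, gives `|||A C|||_p ≤ 2 |||Ã C|||_p`. For the conditioning bound, the upper bound
`‖Ã x‖_p ≤ (3/2) ‖A x‖_p` at `x = C z` suffices when `β ≥ 0`; when `β < 0` the hypothesis forces
`‖Ã C z‖_p = 0`, hence `‖A C z‖_p = 0` and `‖z‖_q ≤ 0`. -/

section LpNorm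

variable {n : ℕ} {p : ℝ}

lemma lpNorm_nonneg (p : ℝ) (v : Fin n → ℝ) : 0 ≤ lpNorm p v := by
  unfold lpNorm; positivity

lemma lpNorm_rpow (hp : p ≠ 0) (v : Fin n → ℝ) : lpNorm p v ^ p = ∑ i, |v i| ^ p := by
  unfold lpNorm
  rw [← Real.rpow_mul (by positivity), one_div_mul_cancel hp, Real.rpow_one]

lemma lpNorm_mono (hp : 0 ≤ p) {u v : Fin n → ℝ} (h : ∀ i, |u i| ≤ |v i|) :
    lpNorm p u ≤ lpNorm p v := by
  unfold lpNorm
  gcongr (∑ i, ?_) ^ _ with i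
  exact Real.rpow_le_rpow (abs_nonneg _) (h i) hp

lemma lpNorm_smul (hp : p ≠ 0) (c : ℝ) (v : Fin n → ℝ) :
    lpNorm p (c • v) = |c| * lpNorm p v := by
  unfold lpNorm
  simp only [Pi.smul_apply, smul_eq_mul, abs_mul, Real.mul_rpow (abs_nonneg c) (abs_nonneg _),
    ← Finset.mul_sum]
  rw [Real.mul_rpow (by positivity) (by positivity), ← Real.rpow_mul (abs_nonneg c),
    mul_one_div_cancel hp, Real.rpow_one]

lemma dualNorm_nonneg (p : ℝ) (v : Fin n → ℝ) : 0 ≤ dualNorm p v := by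
  unfold dualNorm
  split_ifs
  · exact Real.iSup_nonneg fun i => abs_nonneg (v i)
  · exact lpNorm_nonneg _ v

end LpNorm

section EntryNorm

variable {n m k : ℕ} {p : ℝ}

lemma entryNorm_eq_lpNorm_lpNorm_col (hp : p ≠ 0) (M : Matrix (Fin n) (Fin m) ℝ) :
    entryNorm p M = lpNorm p fun j => lpNorm p (Mᵀ j) := by
  rw [entryNorm, lpNorm, Finset.sum_comm]
  congr 1
  refine Finset.sum_congr rfl fun j _ => ?_
  rw [abs_of_nonneg (lpNorm_nonneg _ _), lpNorm_rpow hp]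
  rfl

lemma entryNorm_le_mul_of_lpNorm_col_le (hp : 0 < p) {c : ℝ} (hc : 0 ≤ c)
    {M : Matrix (Fin n) (Fin k) ℝ} {N : Matrix (Fin m) (Fin k) ℝ}
    (h : ∀ j, lpNorm p (Mᵀ j) ≤ c * lpNorm p (Nᵀ j)) :
    entryNorm p M ≤ c * entryNorm p N := by
  rw [entryNorm_eq_lpNorm_lpNorm_col hp.ne', entryNorm_eq_lpNorm_lpNorm_col hp.ne']
  calc lpNorm p (fun j => lpNorm p (Mᵀ j))
      ≤ lpNorm p (c • fun j => lpNorm p (Nᵀ j)) := lpNorm_mono hp.le fun j => by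
        simpa only [Pi.smul_apply, smul_eq_mul, abs_of_nonneg (lpNorm_nonneg _ _),
          abs_of_nonneg (mul_nonneg hc (lpNorm_nonneg _ _))] using h j
    _ = c * lpNorm p (fun j => lpNorm p (Nᵀ j)) := by rw [lpNorm_smul hp.ne', abs_of_nonneg hc]

end EntryNorm

lemma transpose_mul_apply {l m n α : Type*} [Fintype m] [NonUnitalNonAssocSemiring α]
    (A : Matrix l m α) (C : Matrix m n α) (j : n) : (A * C)ᵀ j = A *ᵥ Cᵀ j :=
  rfl

/-- If `At` is a `(1/2, 3/2)` ℓ_p-approximation of `A` and `AtC` is an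
`(α, β, p)`-well-conditioned basis, then `AC` is a `(2α, 2β, p)`-well-conditioned basis. -/
theorem basis_transfer (p : ℝ) (hp : 1 ≤ p) (n nA d r : ℕ)
    (A : Matrix (Fin n) (Fin d) ℝ) (At : Matrix (Fin nA) (Fin d) ℝ)
    (happrox : ∀ x : Fin d → ℝ,
      (1 / 2 : ℝ) * lpNorm p (A.mulVec x) ≤ lpNorm p (At.mulVec x) ∧
      lpNorm p (At.mulVec x) ≤ (3 / 2 : ℝ) * lpNorm p (A.mulVec x))
    (C : Matrix (Fin d) (Fin r) ℝ) (α β : ℝ)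
    (hα : entryNorm p (At * C) ≤ α)
    (hβ : ∀ z : Fin r → ℝ, dualNorm p z ≤ β * lpNorm p ((At * C).mulVec z)) :
    entryNorm p (A * C) ≤ 2 * α ∧
    ∀ z : Fin r → ℝ, dualNorm p z ≤ 2 * β * lpNorm p ((A * C).mulVec z) := by
  refine ⟨?_, fun z => ?_⟩
  · have hcol : ∀ j, lpNorm p ((A * C)ᵀ j) ≤ 2 * lpNorm p ((At * C)ᵀ j) := fun j => by
      rw [transpose_mul_apply, transpose_mul_apply]
      linarith [(happrox (Cᵀ j)).1]
    linarith [entryNorm_le_mul_of_lpNorm_col_le (by linarith) zero_le_two hcol]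
  · obtain ⟨hlower, hupper⟩ := happrox (C *ᵥ z)
    simp only [mulVec_mulVec] at hlower hupper
    have hAt := lpNorm_nonneg p ((At * C) *ᵥ z)
    have hA := lpNorm_nonneg p ((A * C) *ᵥ z)
    rcases le_or_gt 0 β with hβ0 | hβ0
    · calc dualNorm p z ≤ β * lpNorm p ((At * C) *ᵥ z) := hβ z
        _ ≤ β * (3 / 2 * lpNorm p ((A * C) *ᵥ z)) := mul_le_mul_of_nonneg_left hupper hβ0
        _ ≤ 2 * β * lpNorm p ((A * C) *ᵥ z) := by nlinarith
    · have hAt0 : lpNorm p ((At * C) *ᵥ z) = 0 := by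
        nlinarith [dualNorm_nonneg p z, hβ z]
      have hA0 : lpNorm p ((A * C) *ᵥ z) = 0 := by linarith
      simpa [hAt0, hA0] using hβ z
end
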